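/- arXiv:math/0509025 — 8 statements merged into one kernel-verified Lean document; each statement's English description precedes it below -/
import Mathlib

section
/- The map g : ℤ⁺ → ℚ⁺ defined by g(x) = (k+1)/(m+1), where k is the number of occurrences of the digit 4 and m is the number of occurrences of the digit 7 in the decimal representation of x, is surjective. -/
/-!
Given `q = (a + 1) / (b + 1)` with `a b : ℕ`, the number whose decimal digits, from the
least significant one, are `a` fours, `b` sevens and a leading `1` is mapped to `q`.
-/

open List

theorem Nat.digits_ofDigits_append_singleton {b c : ℕ} {L : List ℕ} (hb : 1 < b)
    (hL : ∀ d ∈ L, d < b) (hc₀ : c ≠ 0) (hc : c < b) :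
    Nat.digits b (Nat.ofDigits b (L ++ [c])) = L ++ [c] := by
  refine Nat.digits_ofDigits b hb _ ?_ ?_
  · simpa [or_imp, forall_and, hc] using hL
  · simpa using hc₀

theorem Rat.exists_nat_eq_add_one_div_add_one {q : ℚ} (hq : 0 < q) :
    ∃ a b : ℕ, q = (a + 1) / (b + 1) := by
  refine ⟨q.num.natAbs - 1, q.den - 1, ?_⟩
  have hnum : ((q.num.natAbs - 1 : ℕ) : ℚ) + 1 = q.num := by
    have : ((q.num.natAbs - 1 : ℕ) : ℤ) + 1 = q.num := by
      have := Rat.num_pos.mpr hq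
      omega
    exact_mod_cast this
  have hden : ((q.den - 1 : ℕ) : ℚ) + 1 = q.den := by
    rw [Nat.cast_sub q.pos, Nat.cast_one, sub_add_cancel]
  rw [hnum, hden, Rat.num_div_den]

/-- The map `g : ℤ⁺ → ℚ⁺` with `g(x) = (k+1)/(m+1)`, where `k` and `m` are the number of
fours and sevens in the decimal representation of `x`, is surjective. -/
theorem stmt_8 :
    Function.Surjective
      (fun x : ℕ+ =>
        (⟨(((Nat.digits 10 (x : ℕ)).count 4 : ℚ) + 1) / (((Nat.digits 10 (x : ℕ)).count 7 : ℚ) + 1),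
          by positivity⟩ : {q : ℚ // 0 < q})) := by
  rintro ⟨q, hq⟩
  obtain ⟨a, b, rfl⟩ := Rat.exists_nat_eq_add_one_div_add_one hq
  obtain ⟨n, hn⟩ : ∃ n, Nat.digits 10 n = replicate a 4 ++ replicate b 7 ++ [1] :=
    ⟨_, Nat.digits_ofDigits_append_singleton (by norm_num)
      (by simp +contextual [or_imp]) one_ne_zero (by norm_num)⟩
  have hpos : 0 < n := Nat.pos_of_ne_zero fun h => by simp [h] at hn
  refine ⟨⟨n, hpos⟩, ?_⟩
  simp [hn, count_replicate]
end

section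
/- Suppose that for each prime p, g_p : ℤ → ℕ is a bijection with g_p(0) = 0. Then the map from ℚ⁺ to ℤ⁺ sending the positive rational ∏_{p ∈ 𝒫} p^{α_p} (where α_p is the exponent of p in the unique prime factorization of the rational, zero for all but finitely many p) to the positive integer ∏_{p ∈ 𝒫} p^{g_p(α_p)} is a bijection. -/
/-!
Unique factorization identifies `ℕ+` with the finitely supported exponent vectors `Primes →₀ ℕ`
and `ℚ>0` with `Primes →₀ ℤ`; the bijections `g p` act coordinatewise, and `g p 0 = 0` keeps
supports finite, so they induce a bijection `(Primes →₀ ℤ) ≃ (Primes →₀ ℕ)`.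
The rational case reduces to the natural one: adding a suitable `ℕ`-vector makes any `ℤ`-vector
`ℕ`-valued, so the product map on `ℤ`-vectors has trivial kernel because it is injective on
`ℕ`-vectors, and every `q > 0` is `num / den`.
-/

namespace Finsupp

variable {ι M N : Type*} [Zero M] [Zero N]

noncomputable def mapRangeFamilyEquiv (e : ι → M ≃ N) (he : ∀ i, e i 0 = 0) :
    (ι →₀ M) ≃ (ι →₀ N) where
  toFun f := onFinset f.support (fun i => e i (f i)) fun i hi =>
    mem_support_iff.2 fun h => hi (by rw [h, he])
  invFun f := onFinset f.support (fun i => (e i).symm (f i)) fun i hi =>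
    mem_support_iff.2 fun h => hi (by rw [h, Equiv.symm_apply_eq, he])
  left_inv f := by ext; simp
  right_inv f := by ext; simp

theorem prod_mapRangeFamilyEquiv {P : Type*} [CommMonoid P] (e : ι → M ≃ N)
    (he : ∀ i, e i 0 = 0) (f : ι →₀ M) {h : ι → N → P} (h0 : ∀ i, h i 0 = 1) :
    (mapRangeFamilyEquiv e he f).prod h = f.prod fun i m => h i (e i m) := by
  dsimp only [mapRangeFamilyEquiv, Equiv.coe_fn_mk]
  exact onFinset_prod _ h0

theorem exists_add_natCast_eq_natCast (α : ι →₀ ℤ) :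
    ∃ s a : ι →₀ ℕ, α + s.mapRange Nat.cast Nat.cast_zero = a.mapRange Nat.cast Nat.cast_zero :=
  ⟨(-α).mapRange Int.toNat rfl, α.mapRange Int.toNat rfl, by
    ext i
    simp only [coe_add, Pi.add_apply, mapRange_apply, coe_neg, Pi.neg_apply]
    omega⟩

end Finsupp

def Nat.Primes.prodPow (f : Nat.Primes →₀ ℕ) : ℕ := f.prod fun p k => (p : ℕ) ^ k

noncomputable def PNat.primesFinsuppEquiv : ℕ+ ≃ (Nat.Primes →₀ ℕ) :=
  factorMultisetEquiv.trans (Multiset.toFinsupp.toEquiv : PrimeMultiset ≃ _)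

theorem PNat.coe_primesFinsuppEquiv_symm (f : Nat.Primes →₀ ℕ) :
    (primesFinsuppEquiv.symm f : ℕ) = Nat.Primes.prodPow f := by
  refine (PrimeMultiset.coe_prod (Multiset.toFinsupp.symm f)).trans ?_
  change (f.toMultiset.map ((↑) : Nat.Primes → ℕ)).prod = _
  refine (congrArg Multiset.prod (Finsupp.toMultiset_map f ((↑) : Nat.Primes → ℕ))).trans ?_
  rw [Finsupp.prod_toMultiset]
  exact Finsupp.prod_mapDomain_index (fun _ => pow_zero _) fun _ => pow_add _

namespace Nat.Primes

open Finsupp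

theorem prodPow_injective : Function.Injective prodPow := by
  intro f g h
  apply PNat.primesFinsuppEquiv.symm.injective
  apply PNat.coe_injective
  simpa only [PNat.coe_primesFinsuppEquiv_symm] using h

theorem exists_prodPow_eq (n : ℕ+) : ∃ f, prodPow f = n :=
  ⟨PNat.primesFinsuppEquiv n, by
    rw [← PNat.coe_primesFinsuppEquiv_symm, Equiv.symm_apply_apply]⟩

noncomputable def prodZPow (α : Nat.Primes →₀ ℤ) : ℚ := α.prod fun p k => ((p : ℕ) : ℚ) ^ k

theorem prodZPow_pos (α : Nat.Primes →₀ ℤ) : 0 < prodZPow α :=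
  Finset.prod_pos fun p _ => zpow_pos (mod_cast p.2.pos) _

theorem prodZPow_add (α β : Nat.Primes →₀ ℤ) :
    prodZPow (α + β) = prodZPow α * prodZPow β :=
  prod_add_index' (fun _ => zpow_zero _) fun p => zpow_add₀ (mod_cast p.2.ne_zero)

theorem prodZPow_natCast (f : Nat.Primes →₀ ℕ) :
    prodZPow (f.mapRange Nat.cast Nat.cast_zero) = prodPow f := by
  rw [prodZPow, prod_mapRange_index fun _ => zpow_zero _, prodPow]
  push_cast
  rfl

theorem eq_zero_of_prodZPow_eq_one {α : Nat.Primes →₀ ℤ} (h : prodZPow α = 1) : α = 0 := by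
  obtain ⟨s, a, ha⟩ := α.exists_add_natCast_eq_natCast
  have hsa : s = a := prodPow_injective <| by
    have := congrArg prodZPow ha
    rwa [prodZPow_add, h, one_mul, prodZPow_natCast, prodZPow_natCast, Nat.cast_inj] at this
  rwa [hsa, add_eq_right] at ha

theorem prodZPow_injective : Function.Injective prodZPow := by
  intro α β h
  have := prodZPow_add (α - β) β
  rw [sub_add_cancel, h, eq_comm, mul_eq_right₀ (prodZPow_pos β).ne'] at this
  exact sub_eq_zero.1 (eq_zero_of_prodZPow_eq_one this)

theorem exists_prodZPow_eq {q : ℚ} (hq : 0 < q) : ∃ α, prodZPow α = q := by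
  obtain ⟨a, ha⟩ := exists_prodPow_eq ⟨q.num.toNat, by simpa using hq⟩
  obtain ⟨b, hb⟩ := exists_prodPow_eq ⟨q.den, q.den_pos⟩
  let ι : (Nat.Primes →₀ ℕ) → (Nat.Primes →₀ ℤ) := mapRange Nat.cast Nat.cast_zero
  refine ⟨ι a - ι b, ?_⟩
  have := prodZPow_add (ι a - ι b) (ι b)
  rw [sub_add_cancel, prodZPow_natCast, prodZPow_natCast, ha, hb, PNat.mk_coe, PNat.mk_coe,
    eq_comm, ← eq_div_iff (by positivity)] at this
  rw [this, ← Int.cast_natCast, Int.toNat_of_nonneg (Rat.num_pos.2 hq).le, Rat.num_div_den]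

end Nat.Primes

noncomputable def Rat.posPrimesFinsuppEquiv : {q : ℚ // 0 < q} ≃ (Nat.Primes →₀ ℤ) :=
  (Equiv.ofBijective (fun α => ⟨Nat.Primes.prodZPow α, Nat.Primes.prodZPow_pos α⟩)
    ⟨fun _ _ h => Nat.Primes.prodZPow_injective (congrArg Subtype.val h),
      fun q => (Nat.Primes.exists_prodZPow_eq q.2).imp fun _ => Subtype.ext⟩).symm

theorem Rat.posPrimesFinsuppEquiv_eq {q : {q : ℚ // 0 < q}} {α : Nat.Primes →₀ ℤ}
    (h : (q : ℚ) = Nat.Primes.prodZPow α) : posPrimesFinsuppEquiv q = α :=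
  (Equiv.symm_apply_eq _).2 (Subtype.ext h)

/-- If for each prime `p`, `g_p : ℤ → ℕ` is a bijection with `g_p(0) = 0`, then the map
`ℚ⁺ → ℤ⁺` sending `∏_p p^{α_p}` to `∏_p p^{g_p(α_p)}` is a bijection. -/
theorem stmt_10 (g : {p : ℕ // p.Prime} → ℤ → ℕ)
    (hg : ∀ p, Function.Bijective (g p)) (hg0 : ∀ p, g p 0 = 0) :
    ∃ Φ : {q : ℚ // 0 < q} → ℕ+,
      Function.Bijective Φ ∧
      ∀ α : {p : ℕ // p.Prime} →₀ ℤ, ∀ q : {q : ℚ // 0 < q},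
        (q : ℚ) = (α.prod fun p k => (p.1 : ℚ) ^ k) →
        ((Φ q : ℕ+) : ℕ) = α.prod fun p k => p.1 ^ g p k := by
  -- the ascription to `Nat.Primes` (a synonym of `{p : ℕ // p.Prime}`) lets the equivalences compose
  let G : (Nat.Primes →₀ ℤ) ≃ (Nat.Primes →₀ ℕ) :=
    Finsupp.mapRangeFamilyEquiv (fun p => Equiv.ofBijective (g p) (hg p)) hg0
  refine ⟨Rat.posPrimesFinsuppEquiv.trans (G.trans PNat.primesFinsuppEquiv.symm),
    Equiv.bijective _, fun α q hq => ?_⟩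
  rw [Equiv.trans_apply, Equiv.trans_apply, Rat.posPrimesFinsuppEquiv_eq hq,
    PNat.coe_primesFinsuppEquiv_symm]
  exact Finsupp.prod_mapRangeFamilyEquiv _ _ _ fun _ => pow_zero _
end

section
/- Define a sequence γ : ℤ⁺ → ℚ by the recursion γ_1 = 1, γ_{2k} = 1 + γ_k, and γ_{2k+1} = 1/γ_{2k} = 1/(1 + γ_k) for k ∈ ℤ⁺. Then the map k ↦ γ_k is a bijection from ℤ⁺ onto the set ℚ⁺ of positive rational numbers; that is, every positive rational number occurs exactly once in the sequence γ_1, γ_2, γ_3, …. -/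
/-!
Terms at even indices are `> 1`, terms at odd indices `k > 1` are `< 1`, and `γ₁ = 1`. So `γ_k`
determines the parity of `k`, and undoing one step of the recursion (`q ↦ q - 1` above `1`,
`q ↦ 1/q - 1` below `1`) recovers `γ_{⌊k/2⌋}`: injectivity follows by
induction on `k`. The same two moves send `a/b` to `(a - b)/b` or `(b - a)/a`, decreasing `a + b`,
so every positive fraction is reached by induction on `a + b`.
-/

namespace PNat

theorem eq_one_or_exists_eq_two_mul_or_two_mul_add_one (k : ℕ+) :
    k = 1 ∨ (∃ m : ℕ+, k = 2 * m) ∨ ∃ m : ℕ+, k = 2 * m + 1 := by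
  obtain ⟨m, hm | hm⟩ := Nat.even_or_odd' k
  · have hm0 : 0 < m := by have := k.pos; omega
    exact Or.inr (Or.inl ⟨⟨m, hm0⟩, PNat.eq hm⟩)
  · rcases Nat.eq_zero_or_pos m with rfl | hm0
    · exact Or.inl (PNat.eq hm)
    · exact Or.inr (Or.inr ⟨⟨m, hm0⟩, PNat.eq hm⟩)

theorem two_mul_induction {P : ℕ+ → Prop} (one : P 1) (two_mul : ∀ k, P k → P (2 * k))
    (two_mul_add_one : ∀ k, P k → P (2 * k + 1)) (k : ℕ+) : P k := by
  induction k using PNat.strongInductionOn with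
  | _ k ih =>
    have lt_two_mul (m : ℕ+) : m < 2 * m := by
      rw [← PNat.coe_lt_coe, PNat.mul_coe]; simp
    obtain rfl | ⟨m, rfl⟩ | ⟨m, rfl⟩ := k.eq_one_or_exists_eq_two_mul_or_two_mul_add_one
    · exact one
    · exact two_mul m (ih m (lt_two_mul m))
    · exact two_mul_add_one m (ih m ((lt_two_mul m).trans (PNat.lt_add_right _ _)))

end PNat

structure GammaRecursion (γ : ℕ+ → ℚ) : Prop where
  one : γ 1 = 1
  two_mul : ∀ k, γ (2 * k) = 1 + γ k
  two_mul_add_one : ∀ k, γ (2 * k + 1) = 1 / γ (2 * k)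

namespace GammaRecursion

variable {γ : ℕ+ → ℚ}

theorem two_mul_add_one_eq_inv (hγ : GammaRecursion γ) (k : ℕ+) :
    γ (2 * k + 1) = (1 + γ k)⁻¹ := by
  rw [hγ.two_mul_add_one, hγ.two_mul, one_div]

theorem pos (hγ : GammaRecursion γ) (k : ℕ+) : 0 < γ k := by
  induction k using PNat.two_mul_induction with
  | one => rw [hγ.one]; exact one_pos
  | two_mul k ih => rw [hγ.two_mul]; positivity
  | two_mul_add_one k ih => rw [hγ.two_mul_add_one_eq_inv]; positivity

theorem one_lt_two_mul (hγ : GammaRecursion γ) (k : ℕ+) : 1 < γ (2 * k) := by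
  rw [hγ.two_mul]; linarith [hγ.pos k]

theorem two_mul_add_one_lt_one (hγ : GammaRecursion γ) (k : ℕ+) : γ (2 * k + 1) < 1 := by
  rw [hγ.two_mul_add_one]
  exact (div_lt_one (hγ.pos _)).2 (hγ.one_lt_two_mul k)

theorem eq_one_of_apply_eq_one (hγ : GammaRecursion γ) {k : ℕ+} (hk : γ k = 1) : k = 1 := by
  obtain rfl | ⟨m, rfl⟩ | ⟨m, rfl⟩ := k.eq_one_or_exists_eq_two_mul_or_two_mul_add_one
  · rfl
  · exact absurd hk (hγ.one_lt_two_mul m).ne'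
  · exact absurd hk (hγ.two_mul_add_one_lt_one m).ne

theorem exists_eq_two_mul_of_one_lt (hγ : GammaRecursion γ) {k : ℕ+} (hk : 1 < γ k) :
    ∃ m, k = 2 * m := by
  obtain rfl | h | ⟨m, rfl⟩ := k.eq_one_or_exists_eq_two_mul_or_two_mul_add_one
  · exact absurd hk (by rw [hγ.one]; exact lt_irrefl 1)
  · exact h
  · exact absurd hk (hγ.two_mul_add_one_lt_one m).not_gt

theorem exists_eq_two_mul_add_one_of_lt_one (hγ : GammaRecursion γ) {k : ℕ+} (hk : γ k < 1) :
    ∃ m, k = 2 * m + 1 := by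
  obtain rfl | ⟨m, rfl⟩ | h := k.eq_one_or_exists_eq_two_mul_or_two_mul_add_one
  · exact absurd hk (by rw [hγ.one]; exact lt_irrefl 1)
  · exact absurd hk (hγ.one_lt_two_mul m).not_gt
  · exact h

theorem injective (hγ : GammaRecursion γ) : Function.Injective γ := by
  intro k l hkl
  induction k using PNat.two_mul_induction generalizing l with
  | one => exact (hγ.eq_one_of_apply_eq_one (hkl.symm.trans hγ.one)).symm
  | two_mul k ih =>
    obtain ⟨m, rfl⟩ := hγ.exists_eq_two_mul_of_one_lt (hkl ▸ hγ.one_lt_two_mul k)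
    rw [hγ.two_mul, hγ.two_mul, add_right_inj] at hkl
    rw [ih hkl]
  | two_mul_add_one k ih =>
    obtain ⟨m, rfl⟩ :=
      hγ.exists_eq_two_mul_add_one_of_lt_one (hkl ▸ hγ.two_mul_add_one_lt_one k)
    rw [hγ.two_mul_add_one_eq_inv, hγ.two_mul_add_one_eq_inv, inv_inj, add_right_inj] at hkl
    rw [ih hkl]

theorem exists_eq_div (hγ : GammaRecursion γ) {a b : ℕ} (ha : 0 < a) (hb : 0 < b) :
    ∃ k, γ k = a / b := by
  induction hn : a + b using Nat.strong_induction_on generalizing a b with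
  | _ n ih =>
    have hb' : (b : ℚ) ≠ 0 := by positivity
    have ha' : (a : ℚ) ≠ 0 := by positivity
    rcases lt_trichotomy a b with hab | rfl | hab
    · obtain ⟨k, hk⟩ := ih (b - a + a) (by omega) (Nat.sub_pos_of_lt hab) ha rfl
      refine ⟨2 * k + 1, ?_⟩
      rw [hγ.two_mul_add_one_eq_inv, hk, Nat.cast_sub hab.le, one_add_div ha', inv_div,
        add_sub_cancel]
    · exact ⟨1, by rw [hγ.one, div_self hb']⟩
    · obtain ⟨k, hk⟩ := ih (a - b + b) (by omega) (Nat.sub_pos_of_lt hab) hb rfl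
      refine ⟨2 * k, ?_⟩
      rw [hγ.two_mul, hk, Nat.cast_sub hab.le, one_add_div hb', add_sub_cancel]

theorem exists_eq_of_pos (hγ : GammaRecursion γ) {q : ℚ} (hq : 0 < q) : ∃ k, γ k = q := by
  obtain ⟨a, ha⟩ := Int.eq_ofNat_of_zero_le (Rat.num_pos.2 hq).le
  have ha0 : 0 < a := by have := Rat.num_pos.2 hq; omega
  obtain ⟨k, hk⟩ := hγ.exists_eq_div ha0 q.den_pos
  refine ⟨k, ?_⟩
  calc γ k = (q.num : ℚ) / q.den := by rw [hk, ha, Int.cast_natCast]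
    _ = q := Rat.num_div_den q

end GammaRecursion

/-- If `γ : ℤ⁺ → ℚ` satisfies `γ 1 = 1`, `γ (2k) = 1 + γ k` and `γ (2k+1) = 1/γ (2k)`,
then `k ↦ γ k` is a bijection from `ℤ⁺` onto the positive rationals. -/
theorem stmt_14 (γ : ℕ+ → ℚ) (h1 : γ 1 = 1)
    (h2 : ∀ k : ℕ+, γ (2 * k) = 1 + γ k)
    (h3 : ∀ k : ℕ+, γ (2 * k + 1) = 1 / γ (2 * k)) :
    Set.BijOn γ Set.univ {q : ℚ | 0 < q} := by
  have hγ : GammaRecursion γ := ⟨h1, h2, h3⟩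
  refine ⟨fun k _ => hγ.pos k, hγ.injective.injOn, fun q hq => ?_⟩
  obtain ⟨k, hk⟩ := hγ.exists_eq_of_pos hq
  exact ⟨k, trivial, hk⟩
end

section
/- Define finite sets of positive integers M_k for k ∈ ℤ⁺ by M_1 = {1}, M_{2k} = {n+1 : n ∈ M_k}, and M_{2k+1} = M_{2k} ∪ {1} for k ≥ 1. Then for every positive integer k, the map j ↦ M_j restricted to indices 1 ≤ j < 2^k is a bijection onto the collection of all non-empty subsets of {1, 2, …, k}. -/
/-!
`M j` is the set of positions, counted from `1`, of the binary digits `1` of `j`: halving `j`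
shifts every position down by one, and the last digit contributes the position `1`. So
`j ↦ M j` is the binary-expansion bijection `ℕ ≃ Finset ℕ` shifted into `ℕ+`, under which
`j ≠ 0` corresponds to a non-empty set and `j < 2 ^ k` to a set of positions at most `k`.
-/

theorem Nat.lt_two_pow_iff_forall_mem_bitIndices_lt {n k : ℕ} :
    n < 2 ^ k ↔ ∀ i ∈ n.bitIndices, i < k := by
  refine ⟨fun hn i hi => ?_, fun h => ?_⟩
  · exact (Nat.pow_lt_pow_iff_right (by norm_num)).mp
      ((two_pow_le_of_mem_bitIndices hi).trans_lt hn)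
  · rw [← Finset.sum_toFinset_bitIndices_two_pow n]
    exact Nat.geomSum_lt le_rfl (by simpa using h)

theorem PNat.binaryInduction {P : ℕ+ → Prop} (one : P 1) (two_mul : ∀ k, P k → P (2 * k))
    (two_mul_add_one : ∀ k, P k → P (2 * k + 1)) (j : ℕ+) : P j := by
  induction j using PNat.strongInductionOn with
  | _ j ih =>
    obtain ⟨m, hm | hm⟩ := Nat.even_or_odd' j
    · lift m to ℕ+ using (by have := j.pos; omega)
      obtain rfl : j = 2 * m := PNat.eq (by simpa using hm)
      exact two_mul m (ih m (by rw [← PNat.coe_lt_coe]; simp))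
    · rcases Nat.eq_zero_or_pos m with rfl | hm0
      · obtain rfl : j = 1 := PNat.eq hm
        exact one
      · lift m to ℕ+ using hm0
        obtain rfl : j = 2 * m + 1 := PNat.eq (by simpa using hm)
        exact two_mul_add_one m (ih m (by rw [← PNat.coe_lt_coe]; simp))

def pnatBitIndices : ℕ ≃ Finset ℕ+ :=
  Finset.equivBitIndices.trans Equiv.pnatEquivNat.symm.finsetCongr

theorem pnatBitIndices_apply (n : ℕ) :
    pnatBitIndices n = n.bitIndices.toFinset.image Nat.succPNat := by
  simp [pnatBitIndices, Equiv.finsetCongr_apply, Finset.map_eq_image]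

theorem pnatBitIndices_nonempty_iff {n : ℕ} : (pnatBitIndices n).Nonempty ↔ n ≠ 0 := by
  have : pnatBitIndices 0 = ∅ := by simp [pnatBitIndices_apply]
  rw [Finset.nonempty_iff_ne_empty, ← this, pnatBitIndices.injective.ne_iff]

theorem forall_mem_pnatBitIndices_le_iff {n : ℕ} {k : ℕ+} :
    (∀ x ∈ pnatBitIndices n, x ≤ k) ↔ n < 2 ^ (k : ℕ) := by
  simp [pnatBitIndices_apply, Nat.lt_two_pow_iff_forall_mem_bitIndices_lt, ← PNat.coe_le_coe]

theorem pnatBitIndices_one : pnatBitIndices 1 = {1} := by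
  simp [pnatBitIndices_apply]; rfl

theorem pnatBitIndices_two_mul (n : ℕ) :
    pnatBitIndices (2 * n) = (pnatBitIndices n).image (· + 1) := by
  simp only [pnatBitIndices_apply, Nat.bitIndices_two_mul, List.toFinset, ← Multiset.map_coe,
    Multiset.toFinset_map, Finset.image_image]
  rfl

theorem pnatBitIndices_two_mul_add_one (n : ℕ) :
    pnatBitIndices (2 * n + 1) = pnatBitIndices (2 * n) ∪ {1} := by
  rw [pnatBitIndices_apply, pnatBitIndices_apply, Nat.bitIndices_two_mul_add_one,
    Nat.bitIndices_two_mul, List.toFinset_cons, Finset.image_insert, Finset.insert_eq,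
    Finset.union_comm]
  rfl

theorem eq_pnatBitIndices_of_recursion (M : ℕ+ → Finset ℕ+) (hM1 : M 1 = {1})
    (hM2 : ∀ k : ℕ+, M (2 * k) = (M k).image (fun n => n + 1))
    (hM3 : ∀ k : ℕ+, M (2 * k + 1) = M (2 * k) ∪ {1}) (j : ℕ+) :
    M j = pnatBitIndices j := by
  induction j using PNat.binaryInduction with
  | one => rw [hM1, PNat.one_coe, pnatBitIndices_one]
  | two_mul k ih => rw [hM2, ih, PNat.mul_coe, PNat.val_ofNat, pnatBitIndices_two_mul]
  | two_mul_add_one k ih =>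
    rw [hM3, hM2, ih, PNat.add_coe, PNat.mul_coe, PNat.val_ofNat, PNat.one_coe,
      pnatBitIndices_two_mul_add_one, pnatBitIndices_two_mul]

/-- With `M 1 = {1}`, `M (2k) = {n+1 : n ∈ M k}` and `M (2k+1) = M (2k) ∪ {1}`, for every
positive integer `k` the map `j ↦ M j` restricted to `1 ≤ j < 2^k` is a bijection onto
the collection of non-empty subsets of `{1, …, k}`. -/
theorem stmt_15 (M : ℕ+ → Finset ℕ+) (hM1 : M 1 = {1})
    (hM2 : ∀ k : ℕ+, M (2 * k) = (M k).image (fun n => n + 1))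
    (hM3 : ∀ k : ℕ+, M (2 * k + 1) = M (2 * k) ∪ {1}) :
    ∀ k : ℕ+, Set.BijOn M {j : ℕ+ | j < 2 ^ (k : ℕ)}
      {S : Finset ℕ+ | S.Nonempty ∧ ∀ x ∈ S, x ≤ k} := by
  intro k
  have hM : M = pnatBitIndices ∘ PNat.val :=
    funext (eq_pnatBitIndices_of_recursion M hM1 hM2 hM3)
  rw [hM, Set.bijOn_comp_iff PNat.coe_injective.injOn]
  convert pnatBitIndices.bijective.bijOn_preimage
  ext n
  simp only [Set.mem_image, Set.mem_ofPred_eq, Set.mem_preimage, pnatBitIndices_nonempty_iff,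
    forall_mem_pnatBitIndices_le_iff]
  constructor
  · rintro ⟨j, hj, rfl⟩
    exact ⟨j.ne_zero, by exact_mod_cast hj⟩
  · rintro ⟨hn, hlt⟩
    lift n to ℕ+ using Nat.pos_of_ne_zero hn
    exact ⟨n, by exact_mod_cast hlt, rfl⟩
end

section
/- For n ∈ ℕ let b_n denote the number of hyperbinary representations of n, i.e., the number of ways to write n as a sum ∑_{k≥0} a_k 2^k where each a_k ∈ {0,1,2} and all but finitely many a_k are zero (with b_0 = 1). Then for all k ≥ 0, b_{2k+1} = b_k and b_{2k+2} = b_k + b_{k+1}. -/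
/-- `hyperbinary n` is the number of hyperbinary representations of `n`, i.e. the number of
finitely supported functions `a : ℕ → ℕ` with all values at most `2` and `∑_k a_k 2^k = n`. -/
noncomputable def hyperbinary (n : ℕ) : ℕ :=
  Nat.card {a : ℕ →₀ ℕ // (∀ k, a k ≤ 2) ∧ (a.sum fun k c => c * 2 ^ k) = n}

/-!
Split off the units digit: `a ↦ (a 0, a (· + 1))` is a bijection, and `a` represents `n` iff
`a 0 ≤ 2` and the shifted digits represent `(n - a 0) / 2`. For odd `n` the units digit must be `1`;
for `n = 2k + 2` it is `2` (leaving `k`) or `0` (leaving `k + 1`). Finiteness of the sets of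
representations, needed to add their cardinalities, holds because `a k * 2 ^ k ≤ n`.
-/

namespace Finsupp

section NatCons

variable {M : Type*} [AddZeroClass M]

noncomputable def natCons (c : M) (b : ℕ →₀ M) : ℕ →₀ M :=
  single 0 c + b.embDomain ⟨Nat.succ, Nat.succ_injective⟩

noncomputable def natTail (a : ℕ →₀ M) : ℕ →₀ M :=
  a.comapDomain Nat.succ Nat.succ_injective.injOn

@[simp] lemma natCons_apply_zero (c : M) (b : ℕ →₀ M) : natCons c b 0 = c := by
  rw [natCons, add_apply, single_eq_same, embDomain_of_notMem_range, add_zero]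
  rintro ⟨k, hk⟩
  exact Nat.succ_ne_zero k hk

@[simp] lemma natCons_apply_succ (c : M) (b : ℕ →₀ M) (k : ℕ) : natCons c b (k + 1) = b k := by
  rw [natCons, add_apply, single_eq_of_ne (by omega), zero_add]
  exact embDomain_apply_self ⟨Nat.succ, Nat.succ_injective⟩ b k

@[simp] lemma natTail_apply (a : ℕ →₀ M) (k : ℕ) : natTail a k = a (k + 1) := rfl

@[simp] lemma natTail_natCons (c : M) (b : ℕ →₀ M) : natTail (natCons c b) = b := by
  ext k
  simp

lemma natCons_head_natTail (a : ℕ →₀ M) : natCons (a 0) (natTail a) = a := by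
  ext (_ | k) <;> simp

lemma exists_natCons_eq (a : ℕ →₀ M) : ∃ c b, natCons c b = a :=
  ⟨a 0, natTail a, natCons_head_natTail a⟩

lemma natCons_inj {c c' : M} {b b' : ℕ →₀ M} :
    natCons c b = natCons c' b' ↔ c = c' ∧ b = b' := by
  refine ⟨fun h => ⟨?_, ?_⟩, fun ⟨hc, hb⟩ => hc ▸ hb ▸ rfl⟩
  · simpa using congr($h 0)
  · simpa using congr(natTail $h)

lemma natCons_injective (c : M) : Function.Injective (natCons c) :=
  fun _ _ h => (natCons_inj.1 h).2

lemma natCons_mem_image_natCons {c c' : M} {b : ℕ →₀ M} {s : Set (ℕ →₀ M)} :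
    natCons c b ∈ natCons c' '' s ↔ c = c' ∧ b ∈ s := by
  simp only [Set.mem_image, natCons_inj]
  grind

lemma disjoint_image_natCons {c c' : M} (h : c ≠ c') (s t : Set (ℕ →₀ M)) :
    Disjoint (natCons c '' s) (natCons c' '' t) := by
  rw [Set.disjoint_left]
  rintro _ ⟨b, -, rfl⟩ ⟨b', -, hb⟩
  exact h (natCons_inj.1 hb).1.symm

end NatCons

lemma sum_natCons {M N : Type*} [AddZeroClass M] [AddCommMonoid N] (c : M) (b : ℕ →₀ M)
    {g : ℕ → M → N} (h_zero : ∀ k, g k 0 = 0) (h_add : ∀ k m m', g k (m + m') = g k m + g k m') :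
    (natCons c b).sum g = g 0 c + b.sum fun k => g (k + 1) := by
  rw [natCons, sum_add_index' h_zero h_add, sum_single_index (h_zero 0), sum_embDomain]
  rfl

def ofDigits (b : ℕ) (a : ℕ →₀ ℕ) : ℕ :=
  a.sum fun k c => c * b ^ k

lemma ofDigits_natCons (b c : ℕ) (a : ℕ →₀ ℕ) :
    ofDigits b (natCons c a) = c + b * ofDigits b a := by
  rw [ofDigits, sum_natCons c a (g := fun k c => c * b ^ k) (fun _ => zero_mul _)
    (fun _ _ _ => add_mul _ _ _), ofDigits, mul_sum, pow_zero, mul_one]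
  exact congrArg (c + ·) (Finset.sum_congr rfl fun k _ => by ring)

lemma pow_le_ofDigits_of_mem_support (b : ℕ) {a : ℕ →₀ ℕ} {k : ℕ} (hk : k ∈ a.support) :
    b ^ k ≤ ofDigits b a :=
  calc b ^ k ≤ a k * b ^ k := Nat.le_mul_of_pos_left _ (Nat.pos_of_ne_zero (mem_support_iff.1 hk))
    _ = (single k (a k)).sum fun k c => c * b ^ k :=
      (sum_single_index (h := fun k c => c * b ^ k) (zero_mul _)).symm
    _ ≤ ofDigits b a := single_le_sum a (fun _ _ => Nat.zero_le _) k

end Finsupp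

open Finsupp

def hyperbinaryReps (n : ℕ) : Set (ℕ →₀ ℕ) :=
  {a | (∀ k, a k ≤ 2) ∧ ofDigits 2 a = n}

lemma hyperbinary_eq_ncard (n : ℕ) : hyperbinary n = (hyperbinaryReps n).ncard :=
  Nat.card_coe_set_eq _

lemma hyperbinaryReps_finite (n : ℕ) : (hyperbinaryReps n).Finite := by
  refine (Finset.finite_toSet ((Finset.range (n + 1)).finsupp fun _ => Finset.range 3)).subset ?_
  rintro a ⟨ha, rfl⟩
  rw [Finset.mem_coe, Finset.mem_finsupp_iff]
  refine ⟨fun k hk => ?_, fun k _ => Finset.mem_range.2 (Nat.lt_succ_of_le (ha k))⟩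
  exact Finset.mem_range.2 (Nat.lt_succ_of_le
    ((Nat.lt_two_pow_self).le.trans (pow_le_ofDigits_of_mem_support 2 hk)))

lemma natCons_mem_hyperbinaryReps {c n : ℕ} {b : ℕ →₀ ℕ} :
    natCons c b ∈ hyperbinaryReps n ↔ c ≤ 2 ∧ (∀ k, b k ≤ 2) ∧ c + 2 * ofDigits 2 b = n := by
  have h_le : (∀ k, natCons c b k ≤ 2) ↔ c ≤ 2 ∧ ∀ k, b k ≤ 2 :=
    ⟨fun h => ⟨by simpa using h 0, fun k => by simpa using h (k + 1)⟩,
      fun ⟨hc, hb⟩ k => by cases k <;> simp [hc, hb]⟩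
  rw [hyperbinaryReps, Set.mem_ofPred_eq, h_le, ofDigits_natCons, and_assoc]

lemma hyperbinaryReps_two_mul_add_one (k : ℕ) :
    hyperbinaryReps (2 * k + 1) = natCons 1 '' hyperbinaryReps k := by
  ext a
  obtain ⟨c, b, rfl⟩ := exists_natCons_eq a
  rw [natCons_mem_hyperbinaryReps, natCons_mem_image_natCons]
  grind [hyperbinaryReps]

lemma hyperbinaryReps_two_mul_add_two (k : ℕ) :
    hyperbinaryReps (2 * k + 2) =
      natCons 2 '' hyperbinaryReps k ∪ natCons 0 '' hyperbinaryReps (k + 1) := by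
  ext a
  obtain ⟨c, b, rfl⟩ := exists_natCons_eq a
  rw [natCons_mem_hyperbinaryReps, Set.mem_union, natCons_mem_image_natCons,
    natCons_mem_image_natCons]
  grind [hyperbinaryReps]

/-- For the hyperbinary counting function: `b_{2k+1} = b_k` and `b_{2k+2} = b_k + b_{k+1}`. -/
theorem stmt_16 : ∀ k : ℕ,
    hyperbinary (2 * k + 1) = hyperbinary k ∧
    hyperbinary (2 * k + 2) = hyperbinary k + hyperbinary (k + 1) := by
  intro k
  simp only [hyperbinary_eq_ncard, hyperbinaryReps_two_mul_add_one,
    hyperbinaryReps_two_mul_add_two]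
  rw [Set.ncard_image_of_injective _ (natCons_injective _),
    Set.ncard_union_eq (disjoint_image_natCons (by norm_num) _ _)
      ((hyperbinaryReps_finite k).image _) ((hyperbinaryReps_finite (k + 1)).image _),
    Set.ncard_image_of_injective _ (natCons_injective _),
    Set.ncard_image_of_injective _ (natCons_injective _)]
  exact ⟨rfl, rfl⟩
end

section
/- Define b : ℕ → ℤ⁺ by b_0 = 1, b_{2k+1} = b_k, and b_{2k+2} = b_k + b_{k+1} for k ≥ 0. Then the map ψ : ℤ⁺ → ℚ⁺ defined by ψ(k) = b_{k−1}/b_k is a bijection; that is, each positive rational number occurs once and only once in the list b_0/b_1, b_1/b_2, b_2/b_3, …. -/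
section CalkinWilfAux

variable (B : ℕ → ℕ)

/-- Coprimality of consecutive terms. -/
theorem cw_cop (hB0 : B 0 = 1) (hB1 : ∀ k, B (2 * k + 1) = B k)
    (hB2 : ∀ k, B (2 * k + 2) = B k + B (k + 1)) :
    ∀ k, Nat.Coprime (B k) (B (k + 1)) := by
  intro k
  induction k using Nat.strong_induction_on with
  | _ k ih =>
    rcases Nat.even_or_odd k with ⟨j, hj⟩ | ⟨j, hj⟩
    · subst hj
      rcases Nat.eq_zero_or_pos j with rfl | hj0
      · simp only [Nat.mul_zero, Nat.zero_add, hB0]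
        have : B 1 = B 0 := by simpa using hB1 0
        simp [this, hB0, Nat.Coprime]
      · obtain ⟨i, rfl⟩ := Nat.exists_eq_add_of_lt hj0
        have hg : 0 + i + 1 + (0 + i + 1) = 2 * i + 2 := by omega
        rw [hg, hB2 i, show 2 * i + 2 + 1 = 2 * (i + 1) + 1 from by ring, hB1 (i + 1)]
        have h := ih i (by omega)
        have : Nat.gcd (B i + B (i + 1)) (B (i + 1)) = Nat.gcd (B i) (B (i + 1)) := by
          rw [Nat.gcd_add_self_left]
        simpa [Nat.Coprime, this] using h
    · subst hj
      have h1 : B (2 * j + 1) = B j := hB1 j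
      have h2 : B (2 * j + 1 + 1) = B j + B (j + 1) := hB2 j
      rw [h1, h2]
      have h := ih j (by omega)
      have : Nat.gcd (B j) (B j + B (j + 1)) = Nat.gcd (B j) (B (j + 1)) := by
        rw [Nat.add_comm (B j) (B (j + 1)), Nat.gcd_add_self_right]
      simpa [Nat.Coprime, this] using h

end CalkinWilfAux

/-- If `b : ℕ → ℤ⁺` satisfies `b 0 = 1`, `b (2k+1) = b k`, `b (2k+2) = b k + b (k+1)`,
then `ψ(k) = b_{k−1}/b_k` is a bijection from `ℤ⁺` onto the positive rationals
(the Calkin–Wilf enumeration). -/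
theorem stmt_17 (b : ℕ → ℕ+) (hb0 : b 0 = 1)
    (hb1 : ∀ k : ℕ, b (2 * k + 1) = b k)
    (hb2 : ∀ k : ℕ, b (2 * k + 2) = b k + b (k + 1)) :
    Set.BijOn (fun k : ℕ+ => ((b ((k : ℕ) - 1) : ℚ) / (b (k : ℕ) : ℚ)))
      Set.univ {q : ℚ | 0 < q} := by
  set B : ℕ → ℕ := fun k => (b k : ℕ) with hBdef
  have hB0 : B 0 = 1 := by simp [hBdef, hb0]
  have hB1 : ∀ k, B (2 * k + 1) = B k := fun k => by simp [hBdef, hb1 k]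
  have hB2 : ∀ k, B (2 * k + 2) = B k + B (k + 1) := fun k => by
    simp [hBdef, hb2 k]
  have hBpos : ∀ k, 0 < B k := fun k => (b k).pos
  have cop : ∀ k, Nat.Coprime (B k) (B (k + 1)) := cw_cop B hB0 hB1 hB2
  -- structure of pairs at even indices ≥ 2 and odd indices ≥ 3
  have heven : ∀ k, B (2 * k + 2 - 1) = B k ∧ B (2 * k + 2) = B k + B (k + 1) :=
    fun k => ⟨by simpa using hB1 k, hB2 k⟩
  have hodd : ∀ k, B (2 * k + 3 - 1) = B k + B (k + 1) ∧ B (2 * k + 3) = B (k + 1) := by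
    intro k
    constructor
    · simpa using hB2 k
    · rw [show 2 * k + 3 = 2 * (k + 1) + 1 from by ring]; exact hB1 (k + 1)
  -- injectivity on pairs
  have inj : ∀ m, ∀ n, 1 ≤ m → 1 ≤ n → B (m - 1) = B (n - 1) → B m = B n → m = n := by
    intro m
    induction m using Nat.strong_induction_on with
    | _ m ih =>
      intro n hm hn hfst hsnd
      -- classify an index p ≥ 1 : p = 1, or p = 2k+2, or p = 2k+3
      have classify : ∀ p : ℕ, 1 ≤ p → p = 1 ∨ (∃ k, p = 2 * k + 2) ∨ ∃ k, p = 2 * k + 3 := by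
        intro p hp
        rcases Nat.even_or_odd p with ⟨j, hj⟩ | ⟨j, hj⟩
        · exact Or.inr (Or.inl ⟨j - 1, by omega⟩)
        · rcases Nat.eq_zero_or_pos j with rfl | hj0
          · exact Or.inl (by omega)
          · exact Or.inr (Or.inr ⟨j - 1, by omega⟩)
      have hB1v : B 1 = 1 := by have := hB1 0; simpa [hB0] using this
      rcases classify m hm with rfl | ⟨j, rfl⟩ | ⟨j, rfl⟩ <;>
        rcases classify n hn with rfl | ⟨k, rfl⟩ | ⟨k, rfl⟩
      · rfl
      · -- m = 1, n even : B n ≥ 2 contradiction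
        exfalso
        have := (heven k).2
        have := hBpos k; have := hBpos (k + 1)
        simp only [hB1v] at hsnd
        omega
      · exfalso
        have := (hodd k).1
        have := hBpos k; have := hBpos (k + 1)
        simp only [Nat.sub_self, hB0] at hfst
        omega
      · exfalso
        have := (heven j).2
        have := hBpos j; have := hBpos (j + 1)
        simp only [hB1v] at hsnd
        omega
      · -- both even
        have hj := heven j; have hk := heven k
        simp only [hj.1, hj.2, hk.1, hk.2] at hfst hsnd
        have h2 : B (j + 1) = B (k + 1) := by omega
        have := ih (j + 1) (by omega) (k + 1) (by omega) (by omega)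
          (by simpa using hfst) (by simpa using h2)
        omega
      · -- m even, n odd : fst<snd vs fst>snd
        exfalso
        have hj := heven j; have hk := hodd k
        simp only [hj.1, hj.2, hk.1, hk.2] at hfst hsnd
        have := hBpos j; have := hBpos (j + 1); have := hBpos k; have := hBpos (k + 1)
        omega
      · exfalso
        have := (hodd j).1
        have := hBpos j; have := hBpos (j + 1)
        simp only [Nat.sub_self, hB0] at hfst
        omega
      · exfalso
        have hj := hodd j; have hk := heven k
        simp only [hj.1, hj.2, hk.1, hk.2] at hfst hsnd
        have := hBpos j; have := hBpos (j + 1); have := hBpos k; have := hBpos (k + 1)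
        omega
      · -- both odd
        have hj := hodd j; have hk := hodd k
        simp only [hj.1, hj.2, hk.1, hk.2] at hfst hsnd
        have h1 : B j = B k := by omega
        have := ih (j + 1) (by omega) (k + 1) (by omega) (by omega)
          (by simpa using h1) (by simpa using hsnd)
        omega
  -- surjectivity on coprime pairs
  have surj : ∀ N a c : ℕ, a + c ≤ N → 0 < a → 0 < c → Nat.Coprime a c →
      ∃ n, 1 ≤ n ∧ B (n - 1) = a ∧ B n = c := by
    intro N
    induction N with
    | zero => intro a c h ha hc _; omega
    | succ N ihN =>
      intro a c h ha hc hcop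
      rcases lt_trichotomy a c with hlt | rfl | hgt
      · obtain ⟨n, hn1, hn2, hn3⟩ := ihN a (c - a) (by omega) ha (by omega)
          (by simpa using (Nat.coprime_sub_self_right (le_of_lt hlt)).mpr hcop)
        refine ⟨2 * n, by omega, ?_, ?_⟩
        · have : B (2 * (n - 1) + 1) = B (n - 1) := hB1 (n - 1)
          rw [show 2 * n - 1 = 2 * (n - 1) + 1 by omega, this, hn2]
        · have : B (2 * (n - 1) + 2) = B (n - 1) + B (n - 1 + 1) := hB2 (n - 1)
          rw [show 2 * n = 2 * (n - 1) + 2 by omega, this, hn2,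
            show n - 1 + 1 = n by omega, hn3]
          omega
      · have : a = 1 := by simpa [Nat.Coprime] using hcop
        subst this
        refine ⟨1, le_refl 1, by simpa using hB0, ?_⟩
        have := hB1 0; simpa [hB0] using this
      · obtain ⟨n, hn1, hn2, hn3⟩ := ihN (a - c) c (by omega) (by omega) hc
          (by simpa using (Nat.coprime_sub_self_left (le_of_lt hgt)).mpr hcop)
        refine ⟨2 * n + 1, by omega, ?_, ?_⟩
        · have : B (2 * (n - 1) + 2) = B (n - 1) + B (n - 1 + 1) := hB2 (n - 1)
          rw [show 2 * n + 1 - 1 = 2 * (n - 1) + 2 by omega, this, hn2,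
            show n - 1 + 1 = n by omega, hn3]
          omega
        · rw [hB1 n, hn3]
  refine ⟨fun k _ => ?_, fun j _ k _ hjk => ?_, fun q hq => ?_⟩
  · -- maps to positives
    simp only [Set.mem_setOf_eq]
    positivity
  · -- injectivity
    simp only at hjk
    have hkpos : ∀ p : ℕ+, (0 : ℚ) < (b (p : ℕ) : ℚ) := fun p => by positivity
    have hcross : (B ((j : ℕ) - 1) : ℚ) * (B (k : ℕ)) = (B ((k : ℕ) - 1)) * (B (j : ℕ)) := by
      have hjne : ((b (j : ℕ) : ℚ)) ≠ 0 := ne_of_gt (hkpos j)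
      have hkne : ((b (k : ℕ) : ℚ)) ≠ 0 := ne_of_gt (hkpos k)
      field_simp at hjk
      push_cast [hBdef]
      linarith [hjk]
    have hcrossN : B ((j : ℕ) - 1) * B (k : ℕ) = B ((k : ℕ) - 1) * B (j : ℕ) := by
      exact_mod_cast hcross
    have hj1 : 1 ≤ (j : ℕ) := j.one_le
    have hk1 : 1 ≤ (k : ℕ) := k.one_le
    have copj : Nat.Coprime (B ((j : ℕ) - 1)) (B (j : ℕ)) := by
      have := cop ((j : ℕ) - 1)
      rwa [show (j : ℕ) - 1 + 1 = (j : ℕ) by omega] at this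
    have copk : Nat.Coprime (B ((k : ℕ) - 1)) (B (k : ℕ)) := by
      have := cop ((k : ℕ) - 1)
      rwa [show (k : ℕ) - 1 + 1 = (k : ℕ) by omega] at this
    have hd1 : B ((j : ℕ) - 1) ∣ B ((k : ℕ) - 1) := by
      have : B ((j : ℕ) - 1) ∣ B ((k : ℕ) - 1) * B (j : ℕ) := ⟨B (k : ℕ), hcrossN.symm⟩
      exact (Nat.Coprime.dvd_of_dvd_mul_right copj this)
    have hd2 : B ((k : ℕ) - 1) ∣ B ((j : ℕ) - 1) := by
      have : B ((k : ℕ) - 1) ∣ B ((j : ℕ) - 1) * B (k : ℕ) := ⟨B (j : ℕ), hcrossN⟩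
      exact (Nat.Coprime.dvd_of_dvd_mul_right copk this)
    have hfst : B ((j : ℕ) - 1) = B ((k : ℕ) - 1) := Nat.dvd_antisymm hd1 hd2
    have hsnd : B (j : ℕ) = B (k : ℕ) := by
      rw [hfst] at hcrossN
      have := hBpos ((k : ℕ) - 1)
      exact (Nat.eq_of_mul_eq_mul_left this (by linarith [hcrossN])).symm
    have : (j : ℕ) = (k : ℕ) := inj _ _ hj1 hk1 hfst hsnd
    exact PNat.coe_injective this
  · -- surjectivity
    simp only [Set.mem_setOf_eq] at hq
    have hnum : 0 < q.num := Rat.num_pos.mpr hq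
    have hcop : Nat.Coprime q.num.natAbs q.den := q.reduced
    obtain ⟨n, hn1, hn2, hn3⟩ := surj (q.num.natAbs + q.den) q.num.natAbs q.den le_rfl
      (by omega) q.pos hcop
    refine ⟨⟨n, hn1⟩, Set.mem_univ _, ?_⟩
    simp only [PNat.mk_coe]
    simp only [hBdef] at hn2 hn3
    have e1 : (b (n - 1) : ℚ) = (q.num.natAbs : ℚ) := by exact_mod_cast hn2
    have e2 : (b n : ℚ) = (q.den : ℚ) := by exact_mod_cast hn3
    have e3 : ((q.num.natAbs : ℚ)) = (q.num : ℚ) := by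
      rw [Nat.cast_natAbs]; exact_mod_cast congrArg (fun z : ℤ => (z : ℚ)) (abs_of_nonneg hnum.le)
    rw [e1, e2, e3]
    exact Rat.num_div_den q
end

section
/- Every rational number r with 0 < r < 1 has a unique representation of the form r = ∑_{j=1}^k ∏_{i=1}^j (1/n_i), where k ≥ 1 and n_1, n_2, …, n_k are integers with 2 ≤ n_1 ≤ n_2 ≤ ⋯ ≤ n_k. -/
/-!
For digits `2 ≤ n₁ ≤ n₂ ≤ ⋯`, the sum `E = 1/n₁ + 1/(n₁n₂) + ⋯` satisfies `E = (1 + E')/n₁`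
with `E'` the sum for the tail, and `1/n₁ ≤ E < 1/(n₁ - 1)`: the upper bound propagates
from the tail because `(1 + 1/(n - 1))/n = 1/(n - 1)`. Hence `n₁ = ⌈E⁻¹⌉`, and the digits are
read off the value one at a time, which gives uniqueness. For existence, the greedy digit
`n = ⌈r⁻¹⌉` leaves the remainder `n r - 1 ∈ [0, r)`; it lies below `1/(n - 1)`, so all later
digits are `≥ n`, and its numerator is smaller than that of `r`, so the algorithm terminates.
-/

theorem Rat.num_natCast_mul_sub_one_lt {r : ℚ} {n : ℕ} (h0 : 0 ≤ n * r - 1)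
    (h : n * r - 1 < r) : (n * r - 1 : ℚ).num < r.num := by
  have hden : (n * r - 1 : ℚ).den ≤ r.den := Nat.le_of_dvd r.den_pos <| by
    simpa using (Rat.sub_den_dvd ((n : ℚ) * r) 1).trans
      (mul_dvd_mul_right (Rat.mul_den_dvd (n : ℚ) r) _)
  set q : ℚ := n * r - 1
  have : (q.num : ℚ) < r.num := calc
    (q.num : ℚ) = q * q.den := q.mul_den_eq_num.symm
    _ ≤ q * r.den := by gcongr
    _ < r * r.den := by gcongr
    _ = r.num := r.mul_den_eq_num
  exact_mod_cast this

section GreedyStep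

variable {K : Type*} [Field K] [LinearOrder K] [IsStrictOrderedRing K] [FloorSemiring K]
  {r : K}

theorem two_le_natCeil_inv (h0 : 0 < r) (h1 : r < 1) : 2 ≤ ⌈r⁻¹⌉₊ :=
  Nat.lt_ceil.2 (by simpa using one_lt_inv₀ h0 |>.2 h1)

theorem one_le_natCeil_inv_mul (h0 : 0 < r) : 1 ≤ ⌈r⁻¹⌉₊ * r := by
  simpa [h0.ne'] using mul_le_mul_of_nonneg_right (Nat.le_ceil r⁻¹) h0.le

theorem natCeil_inv_sub_one_mul_lt (h0 : 0 < r) : ((⌈r⁻¹⌉₊ : K) - 1) * r < 1 := by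
  have := mul_lt_mul_of_pos_right (Nat.ceil_lt_add_one (inv_nonneg.2 h0.le)) h0
  rw [add_mul, inv_mul_cancel₀ h0.ne'] at this
  linarith

theorem natCeil_inv_mul_sub_one_lt (h0 : 0 < r) : ⌈r⁻¹⌉₊ * r - 1 < r := by
  linarith [natCeil_inv_sub_one_mul_lt h0]

theorem natCeil_inv_mul_sub_one_lt_one_div (h0 : 0 < r) (h1 : r < 1) :
    ⌈r⁻¹⌉₊ * r - 1 < 1 / ((⌈r⁻¹⌉₊ : K) - 1) := by
  have hn : (2 : K) ≤ ⌈r⁻¹⌉₊ := by exact_mod_cast two_le_natCeil_inv h0 h1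
  rw [lt_div_iff₀ (by linarith)]
  nlinarith [natCeil_inv_sub_one_mul_lt h0]

end GreedyStep

namespace EngelExpansion

/-- `engelSum [n₁, …, nₖ] = 1/n₁ + 1/(n₁n₂) + ⋯ + 1/(n₁⋯nₖ)`, in Horner form. -/
def engelSum : List ℕ → ℚ
  | [] => 0
  | n :: t => (1 + engelSum t) / n

@[simp] theorem engelSum_nil : engelSum [] = 0 := rfl

theorem engelSum_cons (n : ℕ) (t : List ℕ) : engelSum (n :: t) = (1 + engelSum t) / n := rfl

theorem prod_map_one_div_cons (n : ℕ) (t : List ℕ) :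
    ((n :: t).map fun n => (1 : ℚ) / n).prod = 1 / n * (t.map fun n => (1 : ℚ) / n).prod := by
  simp

theorem sum_prod_take_eq_engelSum (l : List ℕ) :
    ∑ j ∈ Finset.range l.length, ((l.take (j + 1)).map fun n => (1 : ℚ) / n).prod =
      engelSum l := by
  induction l with
  | nil => rfl
  | cons n t ih =>
    rw [List.length_cons, Finset.sum_range_succ', engelSum_cons, ← ih]
    simp only [List.take_succ_cons, prod_map_one_div_cons, ← Finset.mul_sum, List.take_zero]
    simp only [List.pure_def, List.bind_eq_flatMap, List.flatMap_nil, List.map_nil,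
      List.prod_nil, mul_one]
    ring

theorem engelSum_nonneg (l : List ℕ) : 0 ≤ engelSum l := by
  induction l with
  | nil => rfl
  | cons n t ih => rw [engelSum_cons]; positivity

theorem one_div_le_engelSum_cons (n : ℕ) (t : List ℕ) : 1 / (n : ℚ) ≤ engelSum (n :: t) :=
  div_le_div_of_nonneg_right (le_add_of_nonneg_right (engelSum_nonneg t)) n.cast_nonneg

def IsEngelDigits (l : List ℕ) : Prop :=
  l.Pairwise (· ≤ ·) ∧ ∀ x ∈ l, 2 ≤ x

theorem IsEngelDigits.nil : IsEngelDigits [] := ⟨List.Pairwise.nil, by simp⟩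

theorem isEngelDigits_cons {n : ℕ} {t : List ℕ} :
    IsEngelDigits (n :: t) ↔ 2 ≤ n ∧ (∀ x ∈ t, n ≤ x) ∧ IsEngelDigits t := by
  simp only [IsEngelDigits, List.pairwise_cons, List.forall_mem_cons]
  tauto

theorem engelSum_cons_lt {n : ℕ} {t : List ℕ} (h : IsEngelDigits (n :: t)) :
    engelSum (n :: t) < 1 / ((n : ℚ) - 1) := by
  induction t generalizing n with
  | nil =>
    have hn : (2 : ℚ) ≤ n := by exact_mod_cast (isEngelDigits_cons.1 h).1
    rw [engelSum_cons, engelSum_nil, div_lt_div_iff₀ (by linarith) (by linarith)]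
    linarith
  | cons m t ih =>
    obtain ⟨h2n, hle, ht⟩ := isEngelDigits_cons.1 h
    have hn : (2 : ℚ) ≤ n := by exact_mod_cast h2n
    have hnm : (n : ℚ) ≤ m := by exact_mod_cast hle m List.mem_cons_self
    have htail : engelSum (m :: t) < 1 / ((n : ℚ) - 1) :=
      (ih ht).trans_le (one_div_le_one_div_of_le (by linarith) (by linarith))
    rw [lt_div_iff₀ (by linarith)] at htail
    rw [engelSum_cons, div_lt_div_iff₀ (by linarith) (by linarith)]
    linarith

theorem natCeil_inv_engelSum_cons {n : ℕ} {t : List ℕ} (h : IsEngelDigits (n :: t)) :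
    ⌈(engelSum (n :: t))⁻¹⌉₊ = n := by
  have h2n := (isEngelDigits_cons.1 h).1
  have hn : (2 : ℚ) ≤ n := by exact_mod_cast h2n
  have hlo := one_div_le_engelSum_cons n t
  have hhi := engelSum_cons_lt h
  have hpos : 0 < engelSum (n :: t) := lt_of_lt_of_le (by positivity) hlo
  rw [Nat.ceil_eq_iff (by omega), Nat.cast_sub (by omega), Nat.cast_one,
    lt_inv_comm₀ (by linarith) hpos, inv_le_comm₀ hpos (by linarith), ← one_div, ← one_div]
  exact ⟨hhi, hlo⟩

theorem IsEngelDigits.engelSum_eq_zero_iff {l : List ℕ} (h : IsEngelDigits l) :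
    engelSum l = 0 ↔ l = [] := by
  refine ⟨fun h0 => ?_, fun hl => hl ▸ engelSum_nil⟩
  obtain _ | ⟨n, t⟩ := l
  · rfl
  · have hn : (2 : ℚ) ≤ n := by exact_mod_cast (isEngelDigits_cons.1 h).1
    have := h0 ▸ one_div_le_engelSum_cons n t
    rw [one_div_nonpos] at this
    linarith

theorem IsEngelDigits.eq_of_engelSum_eq {l₁ l₂ : List ℕ} (h₁ : IsEngelDigits l₁)
    (h₂ : IsEngelDigits l₂) (h : engelSum l₁ = engelSum l₂) : l₁ = l₂ := by
  induction l₁ generalizing l₂ with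
  | nil => exact (h₂.engelSum_eq_zero_iff.1 h.symm).symm
  | cons n t ih =>
    obtain _ | ⟨m, s⟩ := l₂
    · exact h₁.engelSum_eq_zero_iff.1 h
    have hnm : n = m := by
      rw [← natCeil_inv_engelSum_cons h₁, ← natCeil_inv_engelSum_cons h₂, h]
    subst hnm
    obtain ⟨h2n, -, ht⟩ := isEngelDigits_cons.1 h₁
    have hn : (n : ℚ) ≠ 0 := Nat.cast_ne_zero.2 (by omega)
    rw [engelSum_cons, engelSum_cons, div_left_inj' hn, add_right_inj] at h
    rw [ih ht (isEngelDigits_cons.1 h₂).2.2 h]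

theorem IsEngelDigits.le_of_engelSum_lt {l : List ℕ} {n : ℕ} (h : IsEngelDigits l)
    (hl : engelSum l < 1 / ((n : ℚ) - 1)) : ∀ x ∈ l, n ≤ x := by
  obtain _ | ⟨m, t⟩ := l
  · simp
  obtain ⟨h2m, hmt, -⟩ := isEngelDigits_cons.1 h
  have hnm : n ≤ m := by
    by_contra! hmn
    have hm : (2 : ℚ) ≤ m := by exact_mod_cast h2m
    have : 1 / ((n : ℚ) - 1) ≤ 1 / m :=
      one_div_le_one_div_of_le (by linarith) (by rw [le_sub_iff_add_le]; exact_mod_cast hmn)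
    linarith [one_div_le_engelSum_cons m t]
  exact List.forall_mem_cons.2 ⟨hnm, fun x hx => hnm.trans (hmt x hx)⟩

theorem exists_isEngelDigits_engelSum_eq (r : ℚ) (h0 : 0 ≤ r) (h1 : r < 1) :
    ∃ l, IsEngelDigits l ∧ engelSum l = r := by
  induction hk : r.num.toNat using Nat.strong_induction_on generalizing r with
  | _ k ih =>
  obtain rfl | hr := h0.eq_or_lt
  · exact ⟨[], .nil, rfl⟩
  set n := ⌈r⁻¹⌉₊
  have hr'0 : 0 ≤ n * r - 1 := sub_nonneg.2 (one_le_natCeil_inv_mul hr)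
  have hr'r := natCeil_inv_mul_sub_one_lt hr
  have hnum : (n * r - 1 : ℚ).num.toNat < k := by
    have := Rat.num_natCast_mul_sub_one_lt hr'0 hr'r
    have := Rat.num_nonneg.2 hr'0
    omega
  obtain ⟨l, hl, hlr⟩ := ih _ hnum _ hr'0 (hr'r.trans h1) rfl
  have hnl := hl.le_of_engelSum_lt (hlr ▸ natCeil_inv_mul_sub_one_lt_one_div hr h1)
  refine ⟨n :: l, isEngelDigits_cons.2 ⟨two_le_natCeil_inv hr h1, hnl, hl⟩, ?_⟩
  have hn : (n : ℚ) ≠ 0 := by positivity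
  rw [engelSum_cons, hlr, div_eq_iff hn]
  ring

end EngelExpansion

/-- Every rational `r` with `0 < r < 1` has a unique representation
`r = ∑_{j=1}^k ∏_{i=1}^j (1/n_i)` with integers `2 ≤ n_1 ≤ n_2 ≤ ⋯ ≤ n_k`, `k ≥ 1`.
The sequence `n_1, …, n_k` is encoded as a nonempty sorted list. -/
theorem stmt_18 (r : ℚ) (h0 : 0 < r) (h1 : r < 1) :
    ∃! l : List ℕ,
      l ≠ [] ∧ l.Pairwise (· ≤ ·) ∧ (∀ x ∈ l, 2 ≤ x) ∧
      r = ∑ j ∈ Finset.range l.length, ((l.take (j + 1)).map fun n => (1 : ℚ) / n).prod := by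
  simp only [EngelExpansion.sum_prod_take_eq_engelSum]
  obtain ⟨l, ⟨hsorted, h2⟩, rfl⟩ := EngelExpansion.exists_isEngelDigits_engelSum_eq r h0.le h1
  refine ⟨l, ⟨fun hnil => ?_, hsorted, h2, rfl⟩, ?_⟩
  · simp [hnil] at h0
  · rintro l' ⟨-, hsorted', h2', h⟩
    exact EngelExpansion.IsEngelDigits.eq_of_engelSum_eq ⟨hsorted', h2'⟩ ⟨hsorted, h2⟩ h.symm
end

section
/- There exists a bijection Φ from the set ℚ⁺ of positive rational numbers onto the set ℤ⁺ of positive integers such that whenever a rational r with 0 < r < 1 has the representation r = ∑_{j=1}^k ∏_{i=1}^j (1/n_i) with integers 2 ≤ n_1 ≤ n_2 ≤ ⋯ ≤ n_k, then Φ(r/(1−r)) = ∑_{j=1}^k 2^{n_j + j − 3}. (Equivalently, the map x ↦ ψ(x/(x+1)), where ψ(r) = ∑_{j=1}^k 2^{n_j + j − 3} is computed from the unique such representation of r = x/(x+1), is a bijection from ℚ⁺ to ℤ⁺.) -/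
/-!
A rational `r ∈ (0, 1)` has exactly one finite Engel expansion
`r = 1/n₁ + 1/(n₁n₂) + ⋯` with `2 ≤ n₁ ≤ ⋯ ≤ n_k`: the tail value `s` satisfies
`(n₁ - 1) s < 1`, which forces `n₁ = ⌈1/r⌉`, and conversely the greedy choice
`n₁ = ⌈1/r⌉` leaves `n₁ r - 1`, a rational with the same denominator and a smaller
numerator.
The code `∑ 2^(n_j + j - 3)` of such a sequence is `2^(n₁-2)` times an odd number, so its
2-adic valuation recovers `n₁` and the rest of the code, halved, is the code of the tail;
hence the code is a bijection onto the positive integers. Precomposing with the bijection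
`x ↦ x/(x+1)` from `ℚ⁺` onto `(0, 1)` gives `Φ`.
-/

def engelValue : List ℕ → ℚ
  | [] => 0
  | n :: t => (1 + engelValue t) / n

@[simp] theorem engelValue_nil : engelValue [] = 0 := rfl

theorem engelValue_cons (n : ℕ) (t : List ℕ) :
    engelValue (n :: t) = (1 + engelValue t) / n := rfl

theorem engelValue_eq_sum_prod (l : List ℕ) :
    engelValue l =
      ∑ j ∈ Finset.range l.length, ((l.take (j + 1)).map fun n => (1 : ℚ) / n).prod := by
  induction l with
  | nil => rfl
  | cons n t ih =>
    rw [List.length_cons, Finset.sum_range_succ', engelValue_cons, ih]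
    simp [List.take_succ_cons, Finset.mul_sum, div_eq_inv_mul, mul_add]
    exact add_comm _ _

theorem engelValue_nonneg (l : List ℕ) : 0 ≤ engelValue l := by
  induction l with
  | nil => rfl
  | cons n t ih => rw [engelValue_cons]; positivity

theorem engelValue_pos {m : ℕ} (hm : m ≠ 0) {l : List ℕ} (hne : l ≠ [])
    (hl : (m :: l).Pairwise (· ≤ ·)) : 0 < engelValue l := by
  obtain _ | ⟨n, t⟩ := l
  · exact absurd rfl hne
  have hn : m ≤ n := List.rel_of_pairwise_cons hl List.mem_cons_self
  have := engelValue_nonneg t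
  rw [engelValue_cons]
  exact div_pos (by linarith) (by exact_mod_cast (by omega : 0 < n))

theorem sub_one_mul_engelValue_lt_one {m : ℕ} {l : List ℕ}
    (hl : (m :: l).Pairwise (· ≤ ·)) : ((m : ℚ) - 1) * engelValue l < 1 := by
  induction l generalizing m with
  | nil => simp
  | cons n t ih =>
    obtain ⟨hmn, hnt⟩ := List.pairwise_cons_cons_iff_of_trans.1 hl
    obtain rfl | hn := Nat.eq_zero_or_pos n
    · simp [engelValue_cons]
    have hs := ih hnt
    have := engelValue_nonneg t
    have hmn : (m : ℚ) ≤ n := by exact_mod_cast hmn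
    have hn : (0 : ℚ) < n := by exact_mod_cast hn
    rw [engelValue_cons, mul_div_assoc', div_lt_one hn]
    nlinarith

theorem ceil_inv_engelValue_cons {n : ℕ} {t : List ℕ} (hn : n ≠ 0)
    (h : (n :: t).Pairwise (· ≤ ·)) : ⌈(engelValue (n :: t))⁻¹⌉₊ = n := by
  have hs := sub_one_mul_engelValue_lt_one h
  have := engelValue_nonneg t
  have : (0 : ℚ) < n := by exact_mod_cast Nat.pos_of_ne_zero hn
  rw [Nat.ceil_eq_iff hn, engelValue_cons, inv_div, Nat.cast_pred (Nat.pos_of_ne_zero hn),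
    lt_div_iff₀ (by positivity), div_le_iff₀ (by positivity)]
  constructor <;> nlinarith

theorem eq_of_engelValue_eq {m : ℕ} (hm : m ≠ 0) {l l' : List ℕ}
    (hl : (m :: l).Pairwise (· ≤ ·)) (hl' : (m :: l').Pairwise (· ≤ ·))
    (h : engelValue l = engelValue l') : l = l' := by
  induction l generalizing m l' with
  | nil =>
    cases l' with
    | nil => rfl
    | cons n' t' => exact absurd h (engelValue_pos hm (List.cons_ne_nil _ _) hl').ne
  | cons n t ih =>
    cases l' with
    | nil => exact absurd h (engelValue_pos hm (List.cons_ne_nil _ _) hl).ne'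
    | cons n' t' =>
      obtain ⟨hmn, hnt⟩ := List.pairwise_cons_cons_iff_of_trans.1 hl
      obtain ⟨hmn', hnt'⟩ := List.pairwise_cons_cons_iff_of_trans.1 hl'
      have hn : n ≠ 0 := by omega
      obtain rfl : n = n' := by
        rw [← ceil_inv_engelValue_cons hn hnt, ← ceil_inv_engelValue_cons (by omega) hnt', h]
      rw [engelValue_cons, engelValue_cons, div_left_inj' (by exact_mod_cast hn),
        add_right_inj] at h
      rw [ih hn hnt hnt' h]

/-- Stated for a fixed denominator `d`, so that strong induction on the numerator `k` applies. -/
theorem exists_engelValue_eq (d : ℕ) {k m : ℕ} (h : ((m : ℚ) - 1) * (k / d) < 1) :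
    ∃ l, (m :: l).Pairwise (· ≤ ·) ∧ engelValue l = k / d := by
  induction k using Nat.strong_induction_on generalizing m with
  | _ k ih =>
  set r : ℚ := k / d with hr
  obtain hr0 | hr0 := (show 0 ≤ r by positivity).eq_or_lt
  · exact ⟨[], by simp, hr0⟩
  have hk : k ≠ 0 := by rintro rfl; simp [hr] at hr0
  have hd : d ≠ 0 := by rintro rfl; simp [hr] at hr0
  set n := ⌈r⁻¹⌉₊
  have hn₁ : 1 ≤ n * r :=
    calc (1 : ℚ) = r⁻¹ * r := (inv_mul_cancel₀ hr0.ne').symm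
      _ ≤ n * r := by gcongr; exact Nat.le_ceil _
  have hn₂ : (n - 1) * r < 1 :=
    calc (n - 1) * r < r⁻¹ * r := by
          gcongr; linarith [Nat.ceil_lt_add_one (inv_nonneg.2 hr0.le)]
      _ = 1 := inv_mul_cancel₀ hr0.ne'
  have hmn : m ≤ n := by
    have : (m : ℚ) < n + 1 := by nlinarith
    exact Nat.lt_succ_iff.1 (by exact_mod_cast this)
  have hn : (0 : ℚ) < n := by nlinarith
  have hdk : (d : ℚ) ≤ n * k := by
    rw [hr, mul_div_assoc', le_div_iff₀ (by positivity)] at hn₁; linarith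
  have hkd : n * k < d + k := by
    rw [hr, mul_div_assoc', div_lt_iff₀ (by positivity)] at hn₂
    exact_mod_cast (by linarith : (n * k : ℚ) < d + k)
  have hk' : ((n * k - d : ℕ) : ℚ) / d = n * r - 1 := by
    rw [Nat.cast_sub (by exact_mod_cast hdk), hr]; push_cast; field_simp
  obtain ⟨l, hl, hv⟩ := ih (n * k - d) (by omega) (by rw [hk']; nlinarith)
  refine ⟨n :: l, hl.cons_cons_of_trans hmn, ?_⟩
  rw [engelValue_cons, hv, hk']; field_simp; ring

def engelCode : List ℕ → ℕ
  | [] => 0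
  | n :: t => 2 ^ (n - 2) + 2 * engelCode t

theorem engelCode_cons (n : ℕ) (t : List ℕ) :
    engelCode (n :: t) = 2 ^ (n - 2) + 2 * engelCode t := rfl

theorem engelCode_pos {l : List ℕ} (hne : l ≠ []) : 0 < engelCode l := by
  obtain _ | ⟨n, t⟩ := l
  · exact absurd rfl hne
  rw [engelCode_cons]; positivity

theorem engelCode_eq_sum {l : List ℕ} (hl : ∀ x ∈ l, 2 ≤ x) :
    engelCode l = ∑ j : Fin l.length, 2 ^ (l.get j + ((j : ℕ) + 1) - 3) := by
  induction l with
  | nil => rfl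
  | cons n t ih =>
    simp only [List.length_cons]
    rw [engelCode_cons, ih fun x hx => hl x (List.mem_cons_of_mem n hx), Fin.sum_univ_succ,
      Finset.mul_sum]
    congr 1
    refine Finset.sum_congr rfl fun j _ => ?_
    have := hl _ (List.mem_cons_of_mem n (List.get_mem t j))
    rw [← pow_succ']
    congr 1
    simp only [List.get_eq_getElem, Fin.val_succ, List.getElem_cons_succ] at this ⊢
    omega

theorem two_pow_dvd_engelCode {m : ℕ} {l : List ℕ} (h : (m :: l).Pairwise (· ≤ ·)) :
    2 ^ (m - 2) ∣ engelCode l := by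
  induction l generalizing m with
  | nil => exact dvd_zero _
  | cons n t ih =>
    obtain ⟨hmn, hnt⟩ := List.pairwise_cons_cons_iff_of_trans.1 h
    have hpow : 2 ^ (m - 2) ∣ 2 ^ (n - 2) := Nat.pow_dvd_pow 2 (by omega)
    exact dvd_add hpow (dvd_mul_of_dvd_right (hpow.trans (ih hnt)) 2)

theorem padicValNat_engelCode_cons {n : ℕ} {t : List ℕ} (h : (n :: t).Pairwise (· ≤ ·)) :
    padicValNat 2 (engelCode (n :: t)) = n - 2 := by
  obtain ⟨a, ha⟩ := two_pow_dvd_engelCode h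
  have : engelCode (n :: t) = 2 ^ (n - 2) * (2 * a + 1) := by rw [engelCode_cons, ha]; ring
  rw [this, padicValNat.mul (by positivity) (by positivity), padicValNat.prime_pow,
    padicValNat.eq_zero_of_not_dvd (by omega), add_zero]

theorem eq_of_engelCode_eq {m : ℕ} (hm : 2 ≤ m) {l l' : List ℕ}
    (hl : (m :: l).Pairwise (· ≤ ·)) (hl' : (m :: l').Pairwise (· ≤ ·))
    (h : engelCode l = engelCode l') : l = l' := by
  induction l generalizing m l' with
  | nil =>
    cases l' with
    | nil => rfl
    | cons n' t' => exact absurd h (engelCode_pos (List.cons_ne_nil n' t')).ne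
  | cons n t ih =>
    cases l' with
    | nil => exact absurd h (engelCode_pos (List.cons_ne_nil n t)).ne'
    | cons n' t' =>
      obtain ⟨hmn, hnt⟩ := List.pairwise_cons_cons_iff_of_trans.1 hl
      obtain ⟨hmn', hnt'⟩ := List.pairwise_cons_cons_iff_of_trans.1 hl'
      obtain rfl : n = n' := by
        have := congrArg (padicValNat 2) h
        rw [padicValNat_engelCode_cons hnt, padicValNat_engelCode_cons hnt'] at this
        omega
      rw [engelCode_cons, engelCode_cons] at h
      rw [ih (hm.trans hmn) hnt hnt' (by omega)]

theorem exists_engelCode_eq {m N : ℕ} (h : 2 ^ (m - 2) ∣ N) :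
    ∃ l, (m :: l).Pairwise (· ≤ ·) ∧ engelCode l = N := by
  induction N using Nat.strong_induction_on generalizing m with
  | _ N ih =>
  obtain rfl | hN := Nat.eq_zero_or_pos N
  · exact ⟨[], by simp, rfl⟩
  obtain ⟨e, _, ⟨b, rfl⟩, rfl⟩ := Nat.exists_eq_two_pow_mul_odd hN.ne'
  have hme : m - 2 ≤ e := by
    have hodd := Nat.coprime_two_left.2 (odd_two_mul_add_one b)
    exact (Nat.pow_dvd_pow_iff_le_right (by norm_num)).1
      ((hodd.pow_left (m - 2)).dvd_of_dvd_mul_right h)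
  have hlt : 2 ^ e * b < 2 ^ e * (2 * b + 1) := by
    have : 0 < 2 ^ e := by positivity
    nlinarith
  obtain ⟨l, hl, hv⟩ := ih (2 ^ e * b) hlt (show 2 ^ (e + 2 - 2) ∣ 2 ^ e * b by simp)
  refine ⟨(e + 2) :: l, hl.cons_cons_of_trans (by omega), ?_⟩
  rw [engelCode_cons, hv, Nat.add_sub_cancel]; ring

abbrev EngelDigits : Type := {l : List ℕ // l ≠ [] ∧ (2 :: l).Pairwise (· ≤ ·)}

namespace EngelDigits

def value (l : EngelDigits) : Set.Ioo (0 : ℚ) 1 :=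
  ⟨engelValue l.1, engelValue_pos two_ne_zero l.2.1 l.2.2, by
    simpa [one_add_one_eq_two.symm] using sub_one_mul_engelValue_lt_one l.2.2⟩

theorem value_bijective : Function.Bijective value := by
  refine ⟨fun l l' h => Subtype.ext
    (eq_of_engelValue_eq two_ne_zero l.2.2 l'.2.2 (congrArg Subtype.val h)), ?_⟩
  rintro ⟨r, hr0, hr1⟩
  obtain ⟨k, d, rfl⟩ : ∃ k d : ℕ, r = k / d := ⟨r.num.toNat, r.den, by
    rw [← Int.cast_natCast, Int.toNat_of_nonneg (Rat.num_nonneg.2 hr0.le), Rat.num_div_den]⟩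
  obtain ⟨l, hl, hv⟩ := exists_engelValue_eq d (m := 2) (by norm_num; exact hr1)
  refine ⟨⟨l, ?_, hl⟩, Subtype.ext hv⟩
  rintro rfl
  exact hr0.ne hv

def code (l : EngelDigits) : ℕ+ :=
  ⟨engelCode l.1, engelCode_pos l.2.1⟩

theorem code_bijective : Function.Bijective code := by
  refine ⟨fun l l' h => Subtype.ext
    (eq_of_engelCode_eq le_rfl l.2.2 l'.2.2 (congrArg PNat.val h)), fun N => ?_⟩
  obtain ⟨l, hl, hv⟩ := exists_engelCode_eq (m := 2) (N := N) (by simp)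
  refine ⟨⟨l, ?_, hl⟩, PNat.eq hv⟩
  rintro rfl
  exact N.ne_zero hv.symm

end EngelDigits

@[simps]
def posEquivIoo {K : Type*} [Field K] [LinearOrder K] [IsStrictOrderedRing K] :
    {x : K // 0 < x} ≃ Set.Ioo (0 : K) 1 where
  toFun x := ⟨x / (x + 1), by
    have := x.2
    exact ⟨by positivity, (div_lt_one (by positivity)).2 (by linarith)⟩⟩
  invFun r := ⟨r / (1 - r), div_pos r.2.1 (sub_pos.2 r.2.2)⟩
  left_inv x := by
    have := x.2
    ext; simp only; field_simp; ring
  right_inv r := by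
    have := r.2.2
    ext; simp only; field_simp; ring

/-- There is a bijection `Φ : ℚ⁺ → ℤ⁺` such that whenever `0 < r < 1` has the representation
`r = ∑_{j=1}^k ∏_{i=1}^j (1/n_i)` with integers `2 ≤ n_1 ≤ ⋯ ≤ n_k` (encoded as a nonempty
sorted list `l`), then `Φ(r/(1−r)) = ∑_{j=1}^k 2^{n_j + j − 3}`. -/
theorem stmt_19 :
    ∃ Φ : {q : ℚ // 0 < q} → ℕ+,
      Function.Bijective Φ ∧
      ∀ (r : ℚ), 0 < r → r < 1 →
        ∀ l : List ℕ, l ≠ [] → l.Pairwise (· ≤ ·) → (∀ x ∈ l, 2 ≤ x) →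
          r = (∑ j ∈ Finset.range l.length, ((l.take (j + 1)).map fun n => (1 : ℚ) / n).prod) →
          ∀ x : {q : ℚ // 0 < q}, (x : ℚ) = r / (1 - r) →
            ((Φ x : ℕ+) : ℕ) = ∑ j : Fin l.length, 2 ^ (l.get j + ((j : ℕ) + 1) - 3) := by
  let e := Equiv.ofBijective _ EngelDigits.value_bijective
  refine ⟨EngelDigits.code ∘ e.symm ∘ posEquivIoo,
    EngelDigits.code_bijective.comp (e.symm.bijective.comp posEquivIoo.bijective), ?_⟩
  intro r _ hr1 l hne hl hl2 hr x hx
  have hdigits : e.symm (posEquivIoo x) = ⟨l, hne, List.pairwise_cons.2 ⟨hl2, hl⟩⟩ := by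
    rw [Equiv.symm_apply_eq]
    ext
    simp only [posEquivIoo_apply_coe, hx, e, Equiv.ofBijective_apply, EngelDigits.value,
      engelValue_eq_sum_prod, ← hr]
    have : 1 - r ≠ 0 := (sub_pos.2 hr1).ne'
    field_simp
    ring
  simp only [Function.comp_apply, hdigits, EngelDigits.code, PNat.mk_coe, engelCode_eq_sum hl2]
end
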